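/- arXiv:math/0611050 — 3 statements merged into one kernel-verified Lean document; each statement's English description precedes it below -/
import Mathlib

section
/- Let W and W' be random variables on the same probability space with L(W') = L(W), E[W] = 0, Var W = 1, and suppose E[W' | W] = (1 − λ)W + R for some constant 0 < λ < 1 and some square-integrable random variable R. Set V = W' − W and assume E|V|³ < ∞. Let τ be uniformly distributed on [0,1], independent of (W, W'). Let f : ℝ → ℝ be continuously differentiable with bounded f and f', such that f' is Lipschitz (so f'' exists almost everywhere and is bounded). Then λ·E[W f(W)] = (1/2)E[V² f'(W)] + (1/2)E[V³ (1 − τ)² f''(W + τV)] + E[R f(W)]. -/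
/-!
Let `G` be a primitive of `f`. Since `W'` and `W` have the same law, `E[G(W') - G(W)] = 0`.
Because `f'` is Lipschitz, hence absolutely continuous, `G` has a second-order Taylor expansion
with integral remainder, `G(W') - G(W) = V f(W) + V²/2 f'(W) + V³/2 ∫₀¹ (1-t)² f''(W + tV) dt`.
Conditioning on `W` turns `E[V f(W)]` into `E[R f(W)] - λ E[W f(W)]`, and by independence and
Fubini the `t`-integral of the remainder is the average over `τ`.
-/

open MeasureTheory ProbabilityTheory Set

theorem AbsolutelyContinuousOnInterval.integral_eq_sub_of_ae_hasDerivAt {F F' : ℝ → ℝ}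
    {a b : ℝ} (hF : AbsolutelyContinuousOnInterval F a b)
    (hF' : ∀ᵐ x, x ∈ uIcc a b → HasDerivAt F (F' x) x) :
    ∫ x in a..b, F' x = F b - F a := by
  rw [← hF.integral_deriv_eq_sub]
  refine intervalIntegral.integral_congr_ae ?_
  filter_upwards [hF'] with x hx hxab
  exact (hx (uIoc_subset_uIcc hxab)).deriv.symm

theorem contDiff_one_of_hasDerivAt {f f' : ℝ → ℝ} (hf : ∀ x, HasDerivAt f (f' x) x)
    (hf' : Continuous f') : ContDiff ℝ 1 f :=
  contDiff_one_iff_deriv.2 ⟨fun x => (hf x).differentiableAt, by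
    rwa [show deriv f = f' from funext fun x => (hf x).deriv]⟩

theorem taylor_two_integral_remainder {F f f' f'' : ℝ → ℝ} {a b : ℝ}
    (hF : ∀ x, HasDerivAt F (f x) x) (hf : ∀ x, HasDerivAt f (f' x) x)
    (hf'c : Continuous f') (hf' : AbsolutelyContinuousOnInterval f' a b)
    (hf'' : ∀ᵐ x, x ∈ uIcc a b → HasDerivAt f' (f'' x) x) :
    F b - F a - (b - a) * f a - (b - a) ^ 2 / 2 * f' a
      = ∫ x in a..b, (b - x) ^ 2 / 2 * f'' x := by
  have hfC1 := contDiff_one_of_hasDerivAt hf hf'c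
  have hFC1 := contDiff_one_of_hasDerivAt hF hfC1.continuous
  have hlinC1 : ContDiff ℝ 1 fun x : ℝ => b - x := by fun_prop
  have hΨ : AbsolutelyContinuousOnInterval
      (fun x => F x + (b - x) * f x + (b - x) ^ 2 / 2 * f' x) a b :=
    (hFC1.contDiffOn.absolutelyContinuousOnInterval.fun_add
      (hlinC1.mul hfC1).contDiffOn.absolutelyContinuousOnInterval).fun_add
      (((hlinC1.pow 2).div_const 2).contDiffOn.absolutelyContinuousOnInterval.fun_mul hf')
  rw [hΨ.integral_eq_sub_of_ae_hasDerivAt]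
  · ring
  filter_upwards [hf''] with x hx hxab
  have hlin := (hasDerivAt_id' x).const_sub b
  refine (((hF x).fun_add (hlin.fun_mul (hf x))).fun_add
    (((hlin.fun_pow 2).div_const 2).fun_mul (hx hxab))).congr_deriv ?_
  norm_num
  ring

-- The paper's `E^{W,W'}[(1 - τ)² f''(W + τV)]` at `W = a`, `W' = b`.
noncomputable def taylorRemainderIntegral (f'' : ℝ → ℝ) (a b : ℝ) : ℝ :=
  ∫ t in (0 : ℝ)..1, (1 - t) ^ 2 * f'' (a + t * (b - a))

theorem taylor_two_eq_taylorRemainderIntegral {F f f' f'' : ℝ → ℝ} {a b : ℝ}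
    (hF : ∀ x, HasDerivAt F (f x) x) (hf : ∀ x, HasDerivAt f (f' x) x)
    (hf'c : Continuous f') (hf' : AbsolutelyContinuousOnInterval f' a b)
    (hf'' : ∀ᵐ x, x ∈ uIcc a b → HasDerivAt f' (f'' x) x) :
    F b - F a - (b - a) * f a - (b - a) ^ 2 / 2 * f' a
      = (b - a) ^ 3 / 2 * taylorRemainderIntegral f'' a b := by
  rw [taylor_two_integral_remainder hF hf hf'c hf' hf'', taylorRemainderIntegral]
  rcases eq_or_ne (b - a) 0 with hab | hab
  · simp [sub_eq_zero.1 hab]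
  have hsubst := intervalIntegral.integral_comp_add_mul (a := 0) (b := 1)
    (fun x => (b - x) ^ 2 / 2 * f'' x) hab a
  simp only [mul_zero, add_zero, mul_one, add_sub_cancel, smul_eq_mul] at hsubst
  rw [← mul_inv_cancel_left₀ hab (∫ x in a..b, _), ← hsubst,
    ← intervalIntegral.integral_const_mul, ← intervalIntegral.integral_const_mul]
  congr 1
  ext t
  ring_nf

theorem integral_mul_condExp_of_bound {Ω : Type*} {m m₀ : MeasurableSpace Ω}
    {μ : Measure[m₀] Ω} [IsFiniteMeasure μ] (hm : m ≤ m₀) {φ Z : Ω → ℝ}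
    (hφ : StronglyMeasurable[m] φ) (hZ : Integrable Z μ) (c : ℝ) (hφc : ∀ᵐ ω ∂μ, ‖φ ω‖ ≤ c) :
    ∫ ω, φ ω * μ[Z | m] ω ∂μ = ∫ ω, φ ω * Z ω ∂μ := by
  rw [← integral_condExp hm (f := fun ω => φ ω * Z ω)]
  exact integral_congr_ae (condExp_stronglyMeasurable_mul_of_bound hm hφ hZ c hφc).symm

theorem ProbabilityTheory.IndepFun.integral_comp_eq_integral_integral
    {Ω α β E : Type*} [MeasurableSpace Ω] [MeasurableSpace α] [MeasurableSpace β]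
    [NormedAddCommGroup E] [NormedSpace ℝ E]
    {μ : Measure Ω} [IsFiniteMeasure μ] {X : Ω → α} {Y : Ω → β} (hXY : IndepFun X Y μ)
    (hX : AEMeasurable X μ) (hY : Measurable Y) {g : α × β → E}
    (hg : Integrable g ((μ.map X).prod (μ.map Y))) :
    ∫ ω, g (X ω, Y ω) ∂μ = ∫ ω, ∫ x, g (x, Y ω) ∂(μ.map X) ∂μ := by
  have hmap := (indepFun_iff_map_prod_eq_prod_map_map hX hY.aemeasurable).1 hXY
  rw [← integral_map (hX.prodMk hY.aemeasurable) (hmap ▸ hg.aestronglyMeasurable), hmap,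
    integral_prod_symm g hg,
    integral_map hY.aemeasurable hg.integral_prod_right.aestronglyMeasurable]

theorem ProbabilityTheory.IdentDistrib.integral_sub_comp_eq_zero {Ω : Type*} [MeasurableSpace Ω]
    {μ : Measure Ω} {X Y : Ω → ℝ} (h : IdentDistrib X Y μ μ) {F : ℝ → ℝ} (hF : Measurable F)
    (hFX : Integrable (fun ω => F (X ω)) μ) :
    ∫ ω, (F (Y ω) - F (X ω)) ∂μ = 0 := by
  have hFY : Integrable (fun ω => F (Y ω)) μ := (h.comp hF).integrable_snd hFX
  rw [integral_sub hFY hFX, sub_eq_zero]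
  exact (h.comp hF).integral_eq.symm

theorem MeasureTheory.Integrable.mul_comp_of_abs_le {Ω : Type*} [MeasurableSpace Ω]
    {μ : Measure Ω} {Z X : Ω → ℝ} (hZ : Integrable Z μ) {h : ℝ → ℝ} (hh : Measurable h)
    (hX : AEMeasurable X μ) {C : ℝ} (hC : ∀ x, |h x| ≤ C) : Integrable (fun ω => Z ω * h (X ω)) μ :=
  hZ.mul_bdd (hh.comp_aemeasurable hX).aestronglyMeasurable (ae_of_all _ fun ω => hC (X ω))

theorem integral_sub_mul_comp_of_condExp_eq {Ω : Type*} [MeasurableSpace Ω] {μ : Measure Ω}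
    [IsFiniteMeasure μ] {W W' R : Ω → ℝ} (hW : Measurable W) (hW1 : Integrable W μ)
    (hW'1 : Integrable W' μ) (hR1 : Integrable R μ) {l : ℝ}
    (hreg : μ[W' | MeasurableSpace.comap W inferInstance]
      =ᵐ[μ] fun ω => (1 - l) * W ω + R ω)
    {h : ℝ → ℝ} (hh : Measurable h) {C : ℝ} (hC : ∀ x, |h x| ≤ C) :
    ∫ ω, (W' ω - W ω) * h (W ω) ∂μ = ∫ ω, R ω * h (W ω) ∂μ - l * ∫ ω, W ω * h (W ω) ∂μ := by
  have hWh := hW1.mul_comp_of_abs_le hh hW.aemeasurable hC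
  have hW'h := hW'1.mul_comp_of_abs_le hh hW.aemeasurable hC
  have hRh := hR1.mul_comp_of_abs_le hh hW.aemeasurable hC
  have hpull : ∫ ω, h (W ω) * ((1 - l) * W ω + R ω) ∂μ = ∫ ω, h (W ω) * W' ω ∂μ := by
    rw [← integral_mul_condExp_of_bound (φ := fun ω => h (W ω)) hW.comap_le
      (hh.comp (comap_measurable W)).stronglyMeasurable hW'1 C (ae_of_all _ fun ω => hC (W ω))]
    exact integral_congr_ae (hreg.mono fun ω hω => by simp only [hω])
  have hsplit : ∫ ω, h (W ω) * ((1 - l) * W ω + R ω) ∂μ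
      = (1 - l) * ∫ ω, W ω * h (W ω) ∂μ + ∫ ω, R ω * h (W ω) ∂μ := by
    rw [← integral_const_mul, ← integral_add (hWh.const_mul _) hRh]
    exact integral_congr_ae (ae_of_all _ fun ω => by ring)
  have hW'eq : ∫ ω, h (W ω) * W' ω ∂μ = ∫ ω, W' ω * h (W ω) ∂μ :=
    integral_congr_ae (ae_of_all _ fun ω => mul_comm _ _)
  simp only [sub_mul]
  rw [integral_sub hW'h hWh]
  linarith

theorem integrable_cube_mul_remainder_prod {f'' : ℝ → ℝ} {C : ℝ} (hf''m : Measurable f'')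
    (hf''b : ∀ x, |f'' x| ≤ C) {ν : Measure (ℝ × ℝ)} [SFinite ν]
    (hν : Integrable (fun y : ℝ × ℝ => |y.2 - y.1| ^ 3) ν) :
    Integrable (fun p : ℝ × ℝ × ℝ => (p.2.2 - p.2.1) ^ 3 * (1 - p.1) ^ 2
      * f'' (p.2.1 + p.1 * (p.2.2 - p.2.1))) ((volume.restrict (Icc 0 1)).prod ν) := by
  have hdom : Integrable (fun p : ℝ × ℝ × ℝ => (1 - p.1) ^ 2 * (C * |p.2.2 - p.2.1| ^ 3))
      ((volume.restrict (Icc 0 1)).prod ν) :=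
    Integrable.mul_prod (by fun_prop : Continuous fun t : ℝ => (1 - t) ^ 2).integrableOn_Icc
      (hν.const_mul C)
  refine hdom.mono' (by fun_prop : Measurable _).aestronglyMeasurable (ae_of_all _ fun p => ?_)
  rw [Real.norm_eq_abs, abs_mul, abs_mul, abs_pow, abs_sq]
  calc |p.2.2 - p.2.1| ^ 3 * (1 - p.1) ^ 2 * |f'' (p.2.1 + p.1 * (p.2.2 - p.2.1))|
      ≤ |p.2.2 - p.2.1| ^ 3 * (1 - p.1) ^ 2 * C := by gcongr; exact hf''b _
    _ = (1 - p.1) ^ 2 * (C * |p.2.2 - p.2.1| ^ 3) := by ring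

theorem integral_Icc_cube_mul_remainder (f'' : ℝ → ℝ) (a b : ℝ) :
    ∫ t in Icc (0 : ℝ) 1, (b - a) ^ 3 * (1 - t) ^ 2 * f'' (a + t * (b - a))
      = (b - a) ^ 3 * taylorRemainderIntegral f'' a b := by
  rw [integral_Icc_eq_integral_Ioc, ← intervalIntegral.integral_of_le zero_le_one,
    taylorRemainderIntegral, ← intervalIntegral.integral_const_mul]
  simp only [mul_assoc]

theorem integrable_and_integral_remainder_of_indepFun {Ω : Type*} [MeasurableSpace Ω]
    {μ : Measure Ω} [IsFiniteMeasure μ] {W W' τ : Ω → ℝ} (hW : Measurable W)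
    (hW' : Measurable W') (hτ : Measurable τ)
    (hτunif : μ.map τ = (volume : Measure ℝ).restrict (Icc 0 1))
    (hτindep : IndepFun τ (fun ω => (W ω, W' ω)) μ)
    (hV3 : Integrable (fun ω => |W' ω - W ω| ^ 3) μ) {f'' : ℝ → ℝ} {C : ℝ}
    (hf''m : Measurable f'') (hf''b : ∀ x, |f'' x| ≤ C) :
    Integrable (fun ω => (W' ω - W ω) ^ 3 * taylorRemainderIntegral f'' (W ω) (W' ω)) μ ∧
      ∫ ω, (W' ω - W ω) ^ 3 * (1 - τ ω) ^ 2 * f'' (W ω + τ ω * (W' ω - W ω)) ∂μ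
        = ∫ ω, (W' ω - W ω) ^ 3 * taylorRemainderIntegral f'' (W ω) (W' ω) ∂μ := by
  have hY : Measurable fun ω => (W ω, W' ω) := hW.prodMk hW'
  have hg := integrable_cube_mul_remainder_prod hf''m hf''b
    ((integrable_map_measure (by fun_prop) hY.aemeasurable).2 hV3)
  rw [← hτunif] at hg
  have hinner : ∀ ω, ∫ t, (W' ω - W ω) ^ 3 * (1 - t) ^ 2 * f'' (W ω + t * (W' ω - W ω))
      ∂(μ.map τ) = (W' ω - W ω) ^ 3 * taylorRemainderIntegral f'' (W ω) (W' ω) := fun ω => by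
    rw [hτunif]
    exact integral_Icc_cube_mul_remainder f'' (W ω) (W' ω)
  refine ⟨(hg.integral_prod_right.comp_measurable hY).congr (ae_of_all _ hinner), ?_⟩
  rw [hτindep.integral_comp_eq_integral_integral hτ.aemeasurable hY hg]
  exact integral_congr_ae (ae_of_all _ hinner)

theorem integral_taylor_terms_eq_zero {Ω : Type*} [MeasurableSpace Ω] {μ : Measure Ω}
    [IsFiniteMeasure μ] {W W' : Ω → ℝ} (hident : IdentDistrib W W' μ μ) (hW1 : Integrable W μ)
    (hV2 : Integrable (fun ω => (W' ω - W ω) ^ 2) μ) {f f' f'' : ℝ → ℝ} {Cf Cf' : ℝ}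
    {K : NNReal} (hderiv : ∀ x, HasDerivAt f (f' x) x) (hfb : ∀ x, |f x| ≤ Cf)
    (hf'b : ∀ x, |f' x| ≤ Cf') (hf'lip : LipschitzWith K f')
    (hderiv2 : ∀ᵐ x, HasDerivAt f' (f'' x) x)
    (hJ : Integrable (fun ω => (W' ω - W ω) ^ 3 * taylorRemainderIntegral f'' (W ω) (W' ω)) μ) :
    ∫ ω, (W' ω - W ω) * f (W ω) ∂μ + 1 / 2 * ∫ ω, (W' ω - W ω) ^ 2 * f' (W ω) ∂μ
      + 1 / 2 * ∫ ω, (W' ω - W ω) ^ 3 * taylorRemainderIntegral f'' (W ω) (W' ω) ∂μ = 0 := by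
  have hfc : Continuous f := continuous_iff_continuousAt.2 fun x => (hderiv x).continuousAt
  set G : ℝ → ℝ := fun x => ∫ y in (0 : ℝ)..x, f y
  have hG : ∀ x, HasDerivAt G (f x) x := fun x => (hfc.integral_hasStrictDerivAt 0 x).hasDerivAt
  have hGc : Continuous G := continuous_iff_continuousAt.2 fun x => (hG x).continuousAt
  have hGW : Integrable (fun ω => G (W ω)) μ := by
    refine (hW1.norm.const_mul Cf).mono'
      (hGc.measurable.comp_aemeasurable hident.aemeasurable_fst).aestronglyMeasurable
      (ae_of_all _ fun ω => ?_)
    simpa using intervalIntegral.norm_integral_le_of_norm_le_const (f := f) (a := 0) (b := W ω)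
      fun x _ => hfb x
  have hpt : ∀ ω, G (W' ω) - G (W ω) = (W' ω - W ω) * f (W ω)
      + 1 / 2 * ((W' ω - W ω) ^ 2 * f' (W ω))
      + 1 / 2 * ((W' ω - W ω) ^ 3 * taylorRemainderIntegral f'' (W ω) (W' ω)) := fun ω => by
    have := taylor_two_eq_taylorRemainderIntegral (a := W ω) (b := W' ω) hG hderiv
      hf'lip.continuous hf'lip.lipschitzOnWith.absolutelyContinuousOnInterval
      (hderiv2.mono fun x hx _ => hx)
    linarith
  have hW'1 : Integrable W' μ := hident.integrable_snd hW1
  have hVf : Integrable (fun ω => (W' ω - W ω) * f (W ω)) μ :=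
    (hW'1.sub hW1).mul_comp_of_abs_le hfc.measurable hident.aemeasurable_fst hfb
  have hV2f' := hV2.mul_comp_of_abs_le hf'lip.continuous.measurable hident.aemeasurable_fst hf'b
  rw [← hident.integral_sub_comp_eq_zero hGc.measurable hGW, integral_congr_ae (ae_of_all _ hpt),
    integral_add, integral_add, integral_const_mul, integral_const_mul]
  · exact hVf
  · exact hV2f'.const_mul _
  · exact hVf.add (hV2f'.const_mul _)
  · exact hJ.const_mul _

theorem stein_identity_no_exchangeability_general
    {Ω : Type*} [MeasurableSpace Ω] (μ : Measure Ω) [IsProbabilityMeasure μ]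
    (W W' R τ : Ω → ℝ) (hW : Measurable W) (hW' : Measurable W')
    (hτ : Measurable τ)
    (hlaw : μ.map W' = μ.map W)
    (hWsq : MemLp W 2 μ) (hRsq : MemLp R 2 μ)
    (l : ℝ)
    (hreg : μ[W' | MeasurableSpace.comap W inferInstance]
      =ᵐ[μ] fun ω => (1 - l) * W ω + R ω)
    (hV3 : Integrable (fun ω => |W' ω - W ω| ^ 3) μ)
    (hτunif : μ.map τ = (volume : Measure ℝ).restrict (Set.Icc 0 1))
    (hτindep : IndepFun τ (fun ω => (W ω, W' ω)) μ)
    (f f' f'' : ℝ → ℝ)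
    (hderiv : ∀ x, HasDerivAt f (f' x) x)
    (Cf Cf' Cf'' : ℝ) (K : NNReal)
    (hfb : ∀ x, |f x| ≤ Cf) (hf'b : ∀ x, |f' x| ≤ Cf')
    (hf'lip : LipschitzWith K f')
    (hf''m : Measurable f'') (hf''b : ∀ x, |f'' x| ≤ Cf'')
    (hderiv2 : ∀ᵐ x ∂(volume : Measure ℝ), HasDerivAt f' (f'' x) x) :
    l * ∫ ω, W ω * f (W ω) ∂μ
      = (1 / 2) * (∫ ω, (W' ω - W ω) ^ 2 * f' (W ω) ∂μ)
        + (1 / 2) * (∫ ω, (W' ω - W ω) ^ 3 * (1 - τ ω) ^ 2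
            * f'' (W ω + τ ω * (W' ω - W ω)) ∂μ)
        + ∫ ω, R ω * f (W ω) ∂μ := by
  have hident : IdentDistrib W W' μ μ := ⟨hW.aemeasurable, hW'.aemeasurable, hlaw.symm⟩
  have hW'sq : MemLp W' 2 μ := hident.memLp_snd hWsq
  have hfc : Continuous f := continuous_iff_continuousAt.2 fun x => (hderiv x).continuousAt
  obtain ⟨hJ, hremainder⟩ := integrable_and_integral_remainder_of_indepFun hW hW' hτ hτunif
    hτindep hV3 hf''m hf''b
  have htaylor := integral_taylor_terms_eq_zero hident (hWsq.integrable one_le_two)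
    (hW'sq.sub hWsq).integrable_sq hderiv hfb hf'b hf'lip hderiv2 hJ
  have hregression := integral_sub_mul_comp_of_condExp_eq hW (hWsq.integrable one_le_two)
    (hW'sq.integrable one_le_two) (hRsq.integrable one_le_two) hreg hfc.measurable hfb
  rw [hremainder]
  linarith

/-- identity (2.11). For identically distributed `W, W'` with
`E W = 0`, `Var W = 1`, the regression condition `E[W' | W] = (1-λ)W + R`, a uniform
`[0,1]` variable `τ` independent of `(W, W')`, and `f` continuously differentiable with
bounded `f`, `f'`, with `f'` Lipschitz and `f''` a bounded a.e.-derivative of `f'`,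
one has
`λ E[W f(W)] = ½ E[V² f'(W)] + ½ E[V³ (1-τ)² f''(W + τV)] + E[R f(W)]`
where `V = W' - W`. -/
theorem stein_identity_no_exchangeability
    {Ω : Type*} [MeasurableSpace Ω] (μ : Measure Ω) [IsProbabilityMeasure μ]
    (W W' R τ : Ω → ℝ) (hW : Measurable W) (hW' : Measurable W') (hR : Measurable R)
    (hτ : Measurable τ)
    (hlaw : μ.map W' = μ.map W)
    (hWsq : MemLp W 2 μ) (hRsq : MemLp R 2 μ)
    (hmean : ∫ ω, W ω ∂μ = 0)
    (hvar : ∫ ω, (W ω) ^ 2 ∂μ = 1)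
    (l : ℝ) (hl0 : 0 < l) (hl1 : l < 1)
    (hreg : μ[W' | MeasurableSpace.comap W inferInstance]
      =ᵐ[μ] fun ω => (1 - l) * W ω + R ω)
    (hV3 : Integrable (fun ω => |W' ω - W ω| ^ 3) μ)
    (hτunif : μ.map τ = (volume : Measure ℝ).restrict (Set.Icc 0 1))
    (hτindep : IndepFun τ (fun ω => (W ω, W' ω)) μ)
    (f f' f'' : ℝ → ℝ)
    (hderiv : ∀ x, HasDerivAt f (f' x) x)
    (hf'cont : Continuous f')
    (Cf Cf' Cf'' : ℝ) (K : NNReal)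
    (hfb : ∀ x, |f x| ≤ Cf) (hf'b : ∀ x, |f' x| ≤ Cf')
    (hf'lip : LipschitzWith K f')
    (hf''m : Measurable f'') (hf''b : ∀ x, |f'' x| ≤ Cf'')
    (hderiv2 : ∀ᵐ x ∂(volume : Measure ℝ), HasDerivAt f' (f'' x) x) :
    l * ∫ ω, W ω * f (W ω) ∂μ
      = (1 / 2) * (∫ ω, (W' ω - W ω) ^ 2 * f' (W ω) ∂μ)
        + (1 / 2) * (∫ ω, (W' ω - W ω) ^ 3 * (1 - τ ω) ^ 2
            * f'' (W ω + τ ω * (W' ω - W ω)) ∂μ)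
        + ∫ ω, R ω * f (W ω) ∂μ :=
  stein_identity_no_exchangeability_general μ W W' R τ hW hW' hτ hlaw hWsq hRsq l hreg hV3 hτunif
    hτindep f f' f'' hderiv Cf Cf' Cf'' K hfb hf'b hf'lip hf''m hf''b hderiv2
end

section
/- Let h : ℝ → ℝ be measurable with |h(x)| ≤ 1 for all x, let Z be a standard normal random variable, let t > 0, and define h_t(x) = E[h(x + tZ)]. Then h_t is differentiable with h_t'(x) = −t⁻¹ ∫ h(x + ty) φ'(y) dy, where φ is the standard normal density, and sup_x |h_t'(x)| ≤ t⁻¹ √(2/π). -/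
/-!
Write `φ` for the standard normal density. For `t = 1` the substitution `w = v + z` turns
`∫ g (v + z) φ z dz` into `∫ g w φ (w - v) dw`, so the dependence on `v` sits in the smooth
kernel and one may differentiate under the integral sign (a Gaussian dominates `φ'` uniformly on
unit translates). The derivative `-∫ g (v + z) φ' z dz` is at most
`sup |g| · ∫ |φ'| = sup |g| · √(2/π)`. A general `t` follows by the chain rule, since
`h_t x = G (x / t)` for `G` built from `g = h (t ·)`.
-/

open MeasureTheory ProbabilityTheory Real Filter Set

local notation "φ" => gaussianPDFReal 0 1

lemma gaussianPDFReal_zero_one_eq : φ = fun u => rexp (-(u ^ 2) / 2) / √(2 * π) := by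
  ext u
  simp [gaussianPDFReal, div_eq_inv_mul]

lemma hasDerivAt_gaussianPDFReal_zero_one (y : ℝ) : HasDerivAt φ (-y * φ y) y := by
  have hexponent : HasDerivAt (fun u : ℝ => -(u ^ 2) / 2) (-y) y :=
    ((hasDerivAt_pow 2 y).fun_neg.div_const 2).congr_deriv (by ring)
  rw [gaussianPDFReal_zero_one_eq]
  exact (hexponent.exp.div_const (√(2 * π))).congr_deriv (by ring)

lemma deriv_gaussianPDFReal_zero_one : deriv φ = fun y => -y * φ y :=
  funext fun y => (hasDerivAt_gaussianPDFReal_zero_one y).deriv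

lemma integral_Ioi_mul_exp_neg_mul_sq {b : ℝ} (hb : 0 < b) :
    ∫ r in Ioi (0 : ℝ), r * rexp (-b * r ^ 2) = (2 * b)⁻¹ := by
  have hcomplex := integral_mul_cexp_neg_mul_sq (b := (b : ℂ)) (by simpa using hb)
  have hofReal := integral_complex_ofReal (μ := volume.restrict (Ioi (0 : ℝ)))
    (f := fun r => r * rexp (-b * r ^ 2))
  push_cast at hofReal
  rw [hofReal] at hcomplex
  exact_mod_cast hcomplex

lemma mul_gaussianPDFReal_zero_one_eq :
    (fun y => y * φ y) = fun y => (√(2 * π))⁻¹ * (y * rexp (-(1 / 2) * y ^ 2)) := by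
  ext y
  rw [gaussianPDFReal_zero_one_eq]
  ring_nf

lemma integrable_deriv_gaussianPDFReal_zero_one : Integrable (deriv φ) := by
  have hint := ((integrable_mul_exp_neg_mul_sq (b := 1 / 2) (by norm_num)).const_mul
    (√(2 * π))⁻¹).neg
  rw [← mul_gaussianPDFReal_zero_one_eq] at hint
  simpa [deriv_gaussianPDFReal_zero_one] using hint

lemma integral_abs_deriv_gaussianPDFReal_zero_one : ∫ y, |deriv φ y| = √(2 / π) := by
  have habs : (fun y => |deriv φ y|) = fun y => |y| * φ |y| := by
    ext y
    rw [deriv_gaussianPDFReal_zero_one, abs_mul, abs_neg,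
      abs_of_nonneg (gaussianPDFReal_nonneg _ _ _), gaussianPDFReal_zero_one_eq]
    simp only [sq_abs]
  rw [habs, integral_comp_abs (f := fun y => y * φ y), mul_gaussianPDFReal_zero_one_eq,
    integral_const_mul, integral_Ioi_mul_exp_neg_mul_sq (by norm_num),
    sqrt_div' _ pi_pos.le, sqrt_mul' _ pi_pos.le]
  have hsqrt_two : √2 * √2 = 2 := mul_self_sqrt zero_le_two
  field_simp
  linarith

lemma abs_mul_gaussianPDFReal_zero_one_add_le {s : ℝ} (hs : |s| ≤ 1) (y : ℝ) :
    |y + s| * φ (y + s) ≤ rexp (1 / 4) * rexp (-(1 / 8) * y ^ 2) / √(2 * π) := by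
  set u := y + s
  have hlin : |u| ≤ rexp (u ^ 2 / 4) := by
    nlinarith [add_one_le_exp (u ^ 2 / 4), sq_nonneg (|u| - 2), sq_abs u]
  have hshift : u ^ 2 / 4 - u ^ 2 / 2 ≤ 1 / 4 + -(1 / 8) * y ^ 2 := by
    nlinarith [sq_nonneg (y + 2 * s), sq_abs s, abs_nonneg s]
  rw [gaussianPDFReal_zero_one_eq, ← exp_add, mul_div_assoc']
  gcongr
  calc |u| * rexp (-(u ^ 2) / 2) ≤ rexp (u ^ 2 / 4) * rexp (-(u ^ 2) / 2) := by gcongr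
    _ = rexp (u ^ 2 / 4 - u ^ 2 / 2) := by rw [← exp_add]; ring_nf
    _ ≤ rexp (1 / 4 + -(1 / 8) * y ^ 2) := exp_le_exp.2 hshift

theorem hasDerivAt_integral_mul_gaussianPDFReal_sub {g : ℝ → ℝ} {C : ℝ}
    (hg : AEStronglyMeasurable g) (hgC : ∀ w, |g w| ≤ C) (v₀ : ℝ) :
    HasDerivAt (fun v => ∫ w, g w * φ (w - v)) (∫ w, g w * ((w - v₀) * φ (w - v₀))) v₀ := by
  have hderiv (w v : ℝ) :
      HasDerivAt (fun v => g w * φ (w - v)) (g w * ((w - v) * φ (w - v))) v :=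
    (((hasDerivAt_gaussianPDFReal_zero_one (w - v)).comp v
      ((hasDerivAt_id' v).const_sub w)).const_mul (g w)).congr_deriv (by ring)
  have hφ_shift (v : ℝ) : Measurable fun w => φ (w - v) :=
    (measurable_gaussianPDFReal 0 1).comp (measurable_sub_const v)
  have hmeas (v : ℝ) : AEStronglyMeasurable fun w => g w * φ (w - v) :=
    hg.mul (hφ_shift v).aestronglyMeasurable
  have hint : Integrable fun w => g w * φ (w - v₀) := by
    refine ((integrable_gaussianPDFReal 0 1).comp_sub_right v₀ |>.const_mul C).mono' (hmeas v₀)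
      (ae_of_all _ fun w => ?_)
    rw [norm_mul, norm_of_nonneg (gaussianPDFReal_nonneg _ _ _)]
    exact mul_le_mul_of_nonneg_right (hgC w) (gaussianPDFReal_nonneg _ _ _)
  set bound : ℝ → ℝ := fun w => C * (rexp (1 / 4) * rexp (-(1 / 8) * (w - v₀) ^ 2) / √(2 * π))
  have hbound_int : Integrable bound :=
    (((integrable_exp_neg_mul_sq (by norm_num)).comp_sub_right v₀).const_mul _ |>.div_const _
      |>.const_mul C)
  have hbound (w v : ℝ) (hv : v ∈ Metric.ball v₀ 1) :
      ‖g w * ((w - v) * φ (w - v))‖ ≤ bound w := by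
    have hs : |v₀ - v| ≤ 1 := by
      rw [abs_sub_comm]; exact (Metric.mem_ball.1 hv).le
    have hkernel := abs_mul_gaussianPDFReal_zero_one_add_le hs (w - v₀)
    rw [sub_add_sub_cancel] at hkernel
    rw [norm_mul, norm_mul, norm_of_nonneg (gaussianPDFReal_nonneg _ _ _)]
    exact mul_le_mul (hgC w) hkernel (mul_nonneg (abs_nonneg _) (gaussianPDFReal_nonneg _ _ _))
      ((abs_nonneg _).trans (hgC w))
  have hmeas' : AEStronglyMeasurable fun w => g w * ((w - v₀) * φ (w - v₀)) :=
    hg.mul ((measurable_sub_const v₀).mul (hφ_shift v₀)).aestronglyMeasurable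
  exact (hasDerivAt_integral_of_dominated_loc_of_deriv_le (Metric.ball_mem_nhds v₀ one_pos)
    (.of_forall hmeas) hint hmeas' (ae_of_all _ hbound) hbound_int
    (ae_of_all _ fun w v _ => hderiv w v)).2

theorem hasDerivAt_integral_comp_add_mul_gaussianPDFReal {g : ℝ → ℝ} {C : ℝ}
    (hg : AEStronglyMeasurable g) (hgC : ∀ w, |g w| ≤ C) (v₀ : ℝ) :
    HasDerivAt (fun v => ∫ z, g (v + z) * φ z) (-∫ z, g (v₀ + z) * deriv φ z) v₀ := by
  have hsubst (v : ℝ) (k : ℝ → ℝ) : ∫ z, g (v + z) * k z = ∫ w, g w * k (w - v) := by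
    rw [← integral_add_left_eq_self (fun w => g w * k (w - v)) v]
    simp only [add_sub_cancel_left]
  simp only [hsubst, ← integral_neg, deriv_gaussianPDFReal_zero_one, neg_mul, mul_neg, neg_neg]
  exact hasDerivAt_integral_mul_gaussianPDFReal_sub hg hgC v₀

theorem abs_integral_mul_deriv_gaussianPDFReal_le {f : ℝ → ℝ} {C : ℝ} (hfC : ∀ z, |f z| ≤ C) :
    |∫ z, f z * deriv φ z| ≤ C * √(2 / π) := by
  rw [← integral_abs_deriv_gaussianPDFReal_zero_one, ← integral_const_mul, ← Real.norm_eq_abs]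
  refine norm_integral_le_of_norm_le (integrable_deriv_gaussianPDFReal_zero_one.abs.const_mul C)
    (ae_of_all _ fun z => ?_)
  rw [norm_mul]
  exact mul_le_mul_of_nonneg_right (hfC z) (abs_nonneg _)

theorem hasDerivAt_integral_comp_add_mul_gaussianReal {h : ℝ → ℝ} {C : ℝ}
    (hh : AEStronglyMeasurable h) (hhC : ∀ w, |h w| ≤ C) {t : ℝ} (ht : t ≠ 0) (x : ℝ) :
    HasDerivAt (fun u => ∫ z, h (u + t * z) ∂gaussianReal 0 1)
      (-t⁻¹ * ∫ y, h (x + t * y) * deriv φ y) x := by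
  set g : ℝ → ℝ := fun w => h (t * w)
  have hg : AEStronglyMeasurable g :=
    hh.comp_quasiMeasurePreserving ⟨measurable_const_mul t, by
      rw [Real.map_volume_mul_left ht]; exact Measure.smul_absolutelyContinuous⟩
  have hscale (u z : ℝ) : g (u / t + z) = h (u + t * z) := by
    simp only [g, mul_add, mul_div_cancel₀ _ ht]
  have hsmooth : (fun u => ∫ z, h (u + t * z) ∂gaussianReal 0 1) =
      fun u => ∫ z, g (u / t + z) * φ z := by
    ext u
    simp only [integral_gaussianReal_eq_integral_smul one_ne_zero, hscale, smul_eq_mul, mul_comm]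
  rw [hsmooth]
  have hchain := (hasDerivAt_integral_comp_add_mul_gaussianPDFReal hg (fun w => hhC _) (x / t)).comp
    x ((hasDerivAt_id x).div_const t)
  simp only [hscale] at hchain
  exact hchain.congr_deriv (by ring)

theorem abs_deriv_integral_comp_add_mul_gaussianReal_le {h : ℝ → ℝ} {C : ℝ}
    (hh : AEStronglyMeasurable h) (hhC : ∀ w, |h w| ≤ C) {t : ℝ} (ht : 0 < t) (x : ℝ) :
    |deriv (fun u => ∫ z, h (u + t * z) ∂gaussianReal 0 1) x| ≤ t⁻¹ * (C * √(2 / π)) := by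
  rw [(hasDerivAt_integral_comp_add_mul_gaussianReal hh hhC ht.ne' x).deriv, abs_mul, abs_neg,
    abs_of_pos (inv_pos.2 ht)]
  exact mul_le_mul_of_nonneg_left (abs_integral_mul_deriv_gaussianPDFReal_le fun y => hhC _)
    (inv_pos.2 ht).le

/-- Gaussian smoothing: for measurable `h` with `|h| ≤ 1`, `t > 0`, and
`h_t(x) = E[h(x + tZ)]` with `Z` standard normal, `h_t` is differentiable with
`h_t'(x) = -t⁻¹ ∫ h(x + ty) φ'(y) dy` (`φ` the standard normal density), and
`sup_x |h_t'(x)| ≤ t⁻¹ √(2/π)`. -/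
theorem gaussian_smoothing_derivative_bound
    (h : ℝ → ℝ) (hm : Measurable h) (hb : ∀ x, |h x| ≤ 1)
    (t : ℝ) (ht : 0 < t) :
    (∀ x : ℝ, HasDerivAt (fun u => ∫ z, h (u + t * z) ∂(gaussianReal 0 1))
      (-t⁻¹ * ∫ y, h (x + t * y) *
        deriv (fun u => Real.exp (-(u ^ 2) / 2) / Real.sqrt (2 * Real.pi)) y) x)
    ∧ ∀ x : ℝ, |deriv (fun u => ∫ z, h (u + t * z) ∂(gaussianReal 0 1)) x|
        ≤ t⁻¹ * Real.sqrt (2 / Real.pi) := by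
  refine ⟨fun x => ?_, fun x => ?_⟩
  · rw [← gaussianPDFReal_zero_one_eq]
    exact hasDerivAt_integral_comp_add_mul_gaussianReal hm.aestronglyMeasurable hb ht.ne' x
  · simpa using abs_deriv_integral_comp_add_mul_gaussianReal_le hm.aestronglyMeasurable hb ht x
end

section
/- Let (W, W') be an exchangeable pair of random variables taking values in the non-negative integers, with E[W] < ∞, and let λ > 0. For each set A of non-negative integers let f_A be the solution of the Poisson Stein equation λ f(j+1) − j f(j) = 1[j ∈ A] − Po(λ){A} for all j ≥ 0 (with f_A(0) = 0). Then for every constant c > 0, d_TV(L(W), Po(λ)) ≤ sup_A |E[(c P₁(W) − λ) f_A(W + 1) − (c P₋₁(W) − W) f_A(W)]|, where P_i(W) = P[W' − W = i | W], Po(λ) is the Poisson distribution with mean λ, and d_TV denotes total variation distance. -/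
open MeasureTheory ProbabilityTheory
open scoped NNReal Classical

/-!
For each `A`, the Stein equation turns `P(W ∈ A) - Po(λ)(A)` into `E[λ f_A(W+1) - W f_A(W)]`,
while exchangeability gives `E[f_A(W+1) P₁(W)] = E[f_A(W) P₋₁(W)]`: both sides are
`E[h(W, W')] = E[h(W', W)]` for `h(a, b) = 1[b = a + 1] f_A(b)`. So the expectation in the bound
equals `Po(λ)(A) - P(W ∈ A)` for every `c`, and the bound holds with equality. All expectations
are finite since `λ f_A(j+1) - j f_A(j)` is the bounded right-hand side and `f_A` is bounded:
weighting the Stein equation by `λ^j / j!` makes it telescope, and since the right-hand side has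
Poisson mean zero, `f_A(j+1)` is a multiple of the tail of a series with terms at most `λ^k / k!`.
-/

noncomputable def dTV (ν ρ : MeasureTheory.Measure ℕ) : ℝ :=
  ⨆ A : Set ℕ, |(ν A).toReal - (ρ A).toReal|

section SteinEquation

open Finset Nat Real

variable {l : ℝ} {f g : ℕ → ℝ}

theorem pow_div_factorial_mul_stein_solution_eq_sum (hrec : ∀ j : ℕ, l * f (j + 1) - j * f j = g j)
    (j : ℕ) : l ^ (j + 1) / j ! * f (j + 1) = ∑ k ∈ range (j + 1), l ^ k / k ! * g k := by
  induction j with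
  | zero => simpa using hrec 0
  | succ j ih =>
    rw [sum_range_succ, ← ih, ← hrec (j + 1), factorial_succ]
    push_cast
    field_simp
    ring

theorem abs_tsum_pow_div_factorial_mul_nat_add_le (hl : 0 ≤ l) (hg : ∀ k, |g k| ≤ 1) (n : ℕ) :
    |∑' k, l ^ (k + n) / (k + n)! * g (k + n)| ≤ l ^ n / n ! * exp l := by
  have hexp : HasSum (fun k => l ^ n / n ! * (l ^ k / k !)) (l ^ n / n ! * exp l) := by
    rw [exp_eq_exp_ℝ]
    exact (NormedSpace.expSeries_div_hasSum_exp l).mul_left _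
  rw [← norm_eq_abs]
  refine tsum_of_norm_bounded hexp fun k => ?_
  have hfac : (k ! * n ! : ℝ) ≤ (k + n)! := by
    exact_mod_cast Nat.le_of_dvd (factorial_pos _) (factorial_mul_factorial_dvd_factorial_add k n)
  calc ‖l ^ (k + n) / (k + n)! * g (k + n)‖
      ≤ l ^ (k + n) / (k + n)! * 1 := by
        rw [norm_mul, norm_of_nonneg (by positivity)]
        exact mul_le_mul_of_nonneg_left (hg _) (by positivity)
    _ ≤ l ^ (k + n) / (k ! * n !) := by
        rw [mul_one]
        exact div_le_div_of_nonneg_left (by positivity) (by positivity) hfac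
    _ = l ^ n / n ! * (l ^ k / k !) := by
        rw [pow_add]
        field_simp

theorem abs_stein_solution_succ_le_exp (hl : 0 < l) (hg : ∀ k, |g k| ≤ 1)
    (hmean : HasSum (fun k => l ^ k / k ! * g k) 0)
    (hrec : ∀ j : ℕ, l * f (j + 1) - j * f j = g j) (j : ℕ) : |f (j + 1)| ≤ exp l := by
  have htail : l ^ (j + 1) / j ! * f (j + 1)
      = -∑' k, l ^ (k + (j + 1)) / (k + (j + 1))! * g (k + (j + 1)) := by
    rw [pow_div_factorial_mul_stein_solution_eq_sum hrec, eq_neg_iff_add_eq_zero,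
      hmean.summable.sum_add_tsum_nat_add, hmean.tsum_eq]
  have hweight : 0 < l ^ (j + 1) / j ! := by positivity
  refine le_of_mul_le_mul_left ?_ hweight
  calc l ^ (j + 1) / j ! * |f (j + 1)|
      = |∑' k, l ^ (k + (j + 1)) / (k + (j + 1))! * g (k + (j + 1))| := by
        rw [← abs_of_pos hweight, ← abs_mul, htail, abs_neg]
    _ ≤ l ^ (j + 1) / (j + 1)! * exp l := abs_tsum_pow_div_factorial_mul_nat_add_le hl.le hg _
    _ ≤ l ^ (j + 1) / j ! * exp l := by
        gcongr
        exact le_succ j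

end SteinEquation

section PoissonSteinEquation

open Nat Real

variable {l : ℝ≥0} {A : Set ℕ}

theorem abs_ite_mem_sub_poissonMeasure_le_one (k : ℕ) :
    |(if k ∈ A then 1 else 0) - (poissonMeasure l A).toReal| ≤ 1 := by
  have hp : 0 ≤ (poissonMeasure l).real A := measureReal_nonneg
  have hp' : (poissonMeasure l).real A ≤ 1 := measureReal_le_one
  rw [← measureReal_def, abs_le]
  split_ifs <;> constructor <;> linarith

theorem hasSum_pow_div_factorial_mul_ite_mem_sub_poissonMeasure (A : Set ℕ) :
    HasSum (fun k => (l : ℝ) ^ k / k ! * ((if k ∈ A then 1 else 0) - (poissonMeasure l A).toReal))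
      0 := by
  have hA : HasSum (fun k => exp (-l) * l ^ k / k ! * A.indicator 1 k)
      ((poissonMeasure l).real A) := by
    have h := hasSum_integral_poissonMeasure
      ((integrable_const (1 : ℝ)).indicator (μ := poissonMeasure l) (s := A) .of_discrete)
    rwa [← Pi.one_def, integral_indicator_one .of_discrete] at h
  have h := (hA.sub ((hasSum_one_poissonMeasure l).mul_right ((poissonMeasure l).real A))).mul_left
    (exp l)
  rw [one_mul, sub_self, mul_zero] at h
  refine h.congr_fun fun k => ?_
  rw [Set.indicator_apply, ← measureReal_def, mul_div_assoc, ← mul_sub, ← mul_assoc, ← mul_assoc,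
    ← exp_add, add_neg_cancel, exp_zero, one_mul, Pi.one_apply]

theorem abs_poisson_stein_solution_le (hl : 0 < l) {f : ℕ → ℝ}
    (hstein : ∀ j : ℕ, (l : ℝ) * f (j + 1) - j * f j
      = (if j ∈ A then 1 else 0) - (poissonMeasure l A).toReal) (j : ℕ) :
    |f j| ≤ max |f 0| (exp l) := by
  cases j with
  | zero => exact le_max_left _ _
  | succ j =>
    exact (abs_stein_solution_succ_le_exp hl abs_ite_mem_sub_poissonMeasure_le_one
      (hasSum_pow_div_factorial_mul_ite_mem_sub_poissonMeasure A) hstein j).trans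
      (le_max_right _ _)

end PoissonSteinEquation

section ExchangeablePair

variable {Ω : Type*} {mΩ : MeasurableSpace Ω} {μ : Measure Ω}

theorem integral_mul_condExp_of_stronglyMeasurable {m : MeasurableSpace Ω} (hm : m ≤ mΩ)
    [SigmaFinite (μ.trim hm)] {f g : Ω → ℝ} (hf : StronglyMeasurable[m] f)
    (hfg : Integrable (f * g) μ) (hg : Integrable g μ) :
    ∫ ω, f ω * μ[g | m] ω ∂μ = ∫ ω, f ω * g ω ∂μ := by
  calc ∫ ω, f ω * μ[g | m] ω ∂μ = ∫ ω, μ[f * g | m] ω ∂μ :=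
        integral_congr_ae (condExp_mul_of_stronglyMeasurable_left hf hfg hg).symm
    _ = ∫ ω, f ω * g ω ∂μ := integral_condExp hm

theorem integral_comp_prodMk_swap_of_map_eq {α E : Type*} [MeasurableSpace α]
    [NormedAddCommGroup E] [NormedSpace ℝ E] {X Y : Ω → α} (hX : Measurable X)
    (hY : Measurable Y) (hexch : μ.map (fun ω => (X ω, Y ω)) = μ.map (fun ω => (Y ω, X ω)))
    {h : α × α → E} (hh : StronglyMeasurable h) :
    ∫ ω, h (X ω, Y ω) ∂μ = ∫ ω, h (Y ω, X ω) ∂μ := by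
  rw [← integral_map (hX.prodMk hY).aemeasurable hh.aestronglyMeasurable, hexch,
    integral_map (hY.prodMk hX).aemeasurable hh.aestronglyMeasurable]

variable {W W' : Ω → ℕ}

theorem integrable_comp_of_abs_le [IsFiniteMeasure μ] {f : ℕ → ℝ} {M : ℝ} (hW : Measurable W)
    (hf : ∀ j, |f j| ≤ M) : Integrable (fun ω => f (W ω)) μ :=
  .of_bound ((measurable_of_countable f).comp hW).aestronglyMeasurable M (ae_of_all _ fun _ => hf _)

theorem integral_mul_condExp_succ_eq [IsFiniteMeasure μ] (hW : Measurable W) (hW' : Measurable W')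
    (hexch : μ.map (fun ω => (W ω, W' ω)) = μ.map (fun ω => (W' ω, W ω)))
    {f : ℕ → ℝ} {M : ℝ} (hf : ∀ j, |f j| ≤ M) :
    ∫ ω, f (W ω + 1) * μ[fun ω' => if W' ω' = W ω' + 1 then (1 : ℝ) else 0 |
        MeasurableSpace.comap W inferInstance] ω ∂μ
      = ∫ ω, f (W ω) * μ[fun ω' => if W ω' = W' ω' + 1 then (1 : ℝ) else 0 |
        MeasurableSpace.comap W inferInstance] ω ∂μ := by
  let h : ℕ × ℕ → ℝ := fun p => if p.2 = p.1 + 1 then f p.2 else 0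
  have integrable_jump : ∀ X Y : Ω → ℕ, Measurable X → Measurable Y →
      Integrable (fun ω => if Y ω = X ω + 1 then (1 : ℝ) else 0) μ := fun X Y hX hY =>
    .of_bound ((measurable_of_countable fun p : ℕ × ℕ => if p.2 = p.1 + 1 then (1 : ℝ) else 0).comp
      (hX.prodMk hY)).aestronglyMeasurable 1
      (ae_of_all _ fun ω => by split_ifs <;> simp)
  have hmeas : ∀ u : ℕ → ℝ, StronglyMeasurable[MeasurableSpace.comap W inferInstance]
      fun ω => u (W ω) := fun u =>
    ((measurable_of_countable u).comp (comap_measurable W)).stronglyMeasurable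
  rw [integral_mul_condExp_of_stronglyMeasurable hW.comap_le (hmeas fun j => f (j + 1))
      ((integrable_jump W W' hW hW').bdd_mul
        ((hmeas fun j => f (j + 1)).mono hW.comap_le).aestronglyMeasurable
        (ae_of_all _ fun _ => hf _)) (integrable_jump W W' hW hW'),
    integral_mul_condExp_of_stronglyMeasurable hW.comap_le (hmeas f)
      ((integrable_jump W' W hW' hW).bdd_mul
        ((hmeas f).mono hW.comap_le).aestronglyMeasurable
        (ae_of_all _ fun _ => hf _)) (integrable_jump W' W hW' hW)]
  calc ∫ ω, f (W ω + 1) * (if W' ω = W ω + 1 then 1 else 0) ∂μ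
      = ∫ ω, h (W ω, W' ω) ∂μ := by
        congr with ω
        split_ifs with hω <;> simp [h, hω]
    _ = ∫ ω, h (W' ω, W ω) ∂μ :=
        integral_comp_prodMk_swap_of_map_eq hW hW' hexch
          (measurable_of_countable h).stronglyMeasurable
    _ = ∫ ω, f (W ω) * (if W ω = W' ω + 1 then 1 else 0) ∂μ := by
        congr with ω
        split_ifs with hω <;> simp [h, hω]

theorem integral_stein_exchangeable_eq_neg [IsFiniteMeasure μ] (hW : Measurable W)
    (hW' : Measurable W')
    (hexch : μ.map (fun ω => (W ω, W' ω)) = μ.map (fun ω => (W' ω, W ω)))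
    {l c M C : ℝ} {f g : ℕ → ℝ} (hf : ∀ j, |f j| ≤ M) (hg : ∀ j, |g j| ≤ C)
    (hrec : ∀ j : ℕ, l * f (j + 1) - j * f j = g j) :
    ∫ ω, ((c * μ[fun ω' => if W' ω' = W ω' + 1 then (1 : ℝ) else 0 |
          MeasurableSpace.comap W inferInstance] ω - l) * f (W ω + 1)
        - (c * μ[fun ω' => if W ω' = W' ω' + 1 then (1 : ℝ) else 0 |
          MeasurableSpace.comap W inferInstance] ω - W ω) * f (W ω)) ∂μ
      = -∫ ω, g (W ω) ∂μ := by
  set P₁ := μ[fun ω' => if W' ω' = W ω' + 1 then (1 : ℝ) else 0 |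
    MeasurableSpace.comap W inferInstance]
  set P₂ := μ[fun ω' => if W ω' = W' ω' + 1 then (1 : ℝ) else 0 |
    MeasurableSpace.comap W inferInstance]
  have hmul : ∀ {u : ℕ → ℝ} {P : Ω → ℝ}, (∀ j, |u j| ≤ M) → Integrable P μ →
      Integrable (fun ω => u (W ω) * P ω) μ := fun hu hP =>
    hP.bdd_mul ((measurable_of_countable _).comp hW).aestronglyMeasurable
      (ae_of_all _ fun _ => hu _)
  have h₁ : Integrable (fun ω => f (W ω + 1) * P₁ ω) μ :=
    hmul (fun j => hf (j + 1)) integrable_condExp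
  have h₂ : Integrable (fun ω => f (W ω) * P₂ ω) μ := hmul hf integrable_condExp
  calc _ = ∫ ω, (c * (f (W ω + 1) * P₁ ω - f (W ω) * P₂ ω) - g (W ω)) ∂μ := by
        congr with ω
        rw [← hrec]
        ring
    _ = c * (∫ ω, f (W ω + 1) * P₁ ω ∂μ - ∫ ω, f (W ω) * P₂ ω ∂μ) - ∫ ω, g (W ω) ∂μ := by
        have h₃ : Integrable (fun ω => c * (f (W ω + 1) * P₁ ω - f (W ω) * P₂ ω)) μ :=
          (h₁.sub h₂).const_mul c
        rw [integral_sub h₃ (integrable_comp_of_abs_le hW hg),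
          integral_const_mul, integral_sub h₁ h₂]
    _ = -∫ ω, g (W ω) ∂μ := by
        rw [integral_mul_condExp_succ_eq hW hW' hexch hf, sub_self, mul_zero, zero_sub]

theorem integral_ite_mem_sub [IsProbabilityMeasure μ] (hW : Measurable W) (A : Set ℕ) (p : ℝ) :
    ∫ ω, ((if W ω ∈ A then 1 else 0) - p) ∂μ = (μ.map W A).toReal - p := by
  have hind : (fun ω => if W ω ∈ A then (1 : ℝ) else 0) = (W ⁻¹' A).indicator 1 := by
    ext ω
    simp [Set.indicator_apply]
  have hint : Integrable (fun ω => if W ω ∈ A then (1 : ℝ) else 0) μ :=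
    hind ▸ (integrable_const 1).indicator (hW .of_discrete)
  rw [integral_sub hint (integrable_const p), hind, integral_indicator_one (hW .of_discrete),
    integral_const, probReal_univ, one_smul, measureReal_def, Measure.map_apply hW .of_discrete]

end ExchangeablePair

theorem poisson_approximation_exchangeable_general
    {Ω : Type*} [MeasurableSpace Ω] (μ : Measure Ω) [IsProbabilityMeasure μ]
    (W W' : Ω → ℕ) (hW : Measurable W) (hW' : Measurable W')
    (hexch : μ.map (fun ω => (W ω, W' ω)) = μ.map (fun ω => (W' ω, W ω)))
    (l : ℝ≥0) (hl : 0 < l)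
    (f : Set ℕ → ℕ → ℝ)
    (hstein : ∀ (A : Set ℕ) (j : ℕ),
      (l : ℝ) * f A (j + 1) - (j : ℝ) * f A j
        = (if j ∈ A then 1 else 0) - ((poissonMeasure l) A).toReal)
    (c : ℝ) :
    dTV (μ.map W) (poissonMeasure l)
      ≤ ⨆ A : Set ℕ, |∫ ω,
          ((c * (μ[(fun ω' => if W' ω' = W ω' + 1 then (1 : ℝ) else 0) |
                MeasurableSpace.comap W inferInstance]) ω - (l : ℝ)) * f A (W ω + 1)
            - (c * (μ[(fun ω' => if W ω' = W' ω' + 1 then (1 : ℝ) else 0) |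
                MeasurableSpace.comap W inferInstance]) ω - (W ω : ℝ)) * f A (W ω)) ∂μ| := by
  refine le_of_eq (iSup_congr fun A => ?_)
  rw [integral_stein_exchangeable_eq_neg hW hW' hexch (abs_poisson_stein_solution_le hl (hstein A))
    abs_ite_mem_sub_poissonMeasure_le_one (hstein A), abs_neg, integral_ite_mem_sub hW]

/-- bound (2.19). For an exchangeable pair `(W, W')` of
non-negative-integer-valued random variables with `E W < ∞`, `λ > 0`, and `f_A` the
solutions of the Poisson Stein equation, for every `c > 0`,
`d_TV(L(W), Po(λ)) ≤ sup_A |E[(c P₁(W) - λ) f_A(W+1) - (c P₋₁(W) - W) f_A(W)]|`. -/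
theorem poisson_approximation_exchangeable
    {Ω : Type*} [MeasurableSpace Ω] (μ : Measure Ω) [IsProbabilityMeasure μ]
    (W W' : Ω → ℕ) (hW : Measurable W) (hW' : Measurable W')
    (hexch : μ.map (fun ω => (W ω, W' ω)) = μ.map (fun ω => (W' ω, W ω)))
    (hint : Integrable (fun ω => (W ω : ℝ)) μ)
    (l : ℝ≥0) (hl : 0 < l)
    (f : Set ℕ → ℕ → ℝ)
    (hf0 : ∀ A, f A 0 = 0)
    (hstein : ∀ (A : Set ℕ) (j : ℕ),
      (l : ℝ) * f A (j + 1) - (j : ℝ) * f A j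
        = (if j ∈ A then 1 else 0) - ((poissonMeasure l) A).toReal)
    (c : ℝ) (hc : 0 < c) :
    dTV (μ.map W) (poissonMeasure l)
      ≤ ⨆ A : Set ℕ, |∫ ω,
          ((c * (μ[(fun ω' => if W' ω' = W ω' + 1 then (1 : ℝ) else 0) |
                MeasurableSpace.comap W inferInstance]) ω - (l : ℝ)) * f A (W ω + 1)
            - (c * (μ[(fun ω' => if W ω' = W' ω' + 1 then (1 : ℝ) else 0) |
                MeasurableSpace.comap W inferInstance]) ω - (W ω : ℝ)) * f A (W ω)) ∂μ| :=
  poisson_approximation_exchangeable_general μ W W' hW hW' hexch l hl f hstein c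
end
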